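/- For every μ ∈ ℝ, every index m and every θ ∈ ℝ, with Z_m(θ) := e^{a(θ−θ_m)} e^{iθ}, one has the velocity-matching identity Re( i(a+i) e^{a(θ−θ_m)} e^{iθ} · conj( (W^R(θ)+W^L(θ))/2 − μ·Z_m(θ) ) ) = e^{2a(θ−θ_m)} · Im( (a/sinh(πA)) · Σ_{k=0}^{M−1} 𝒜_{mk} g_k + μ(a+i) ). Consequently the left-hand side vanishes for all θ and m if and only if Im( (a/sinh(πA)) Σ_k 𝒜_{mk} g_k + μ(a+i) ) = 0 for every m. -/

import Mathlib

/-- The complex constant `A := −2ai/(a+i)`. -/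
noncomputable def Aconst (a : ℝ) : ℂ := -2 * (a : ℂ) * Complex.I / ((a : ℂ) + Complex.I)

/-- The matrix coefficient
`𝒜_{mk} := e^{A(θ_k−θ_m)} · (e^{−πA)` if `k > m`, `cosh(πA)` if `k = m`, `e^{πA}` if `k < m)`. -/
noncomputable def Amat (a : ℝ) (M : ℕ) (θs : Fin M → ℝ) (m k : Fin M) : ℂ :=
  Complex.exp (Aconst a * ((θs k : ℂ) - (θs m : ℂ))) *
    (if m < k then Complex.exp (-(Real.pi : ℂ) * Aconst a)
     else if k = m then Complex.cosh ((Real.pi : ℂ) * Aconst a)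
     else Complex.exp ((Real.pi : ℂ) * Aconst a))

/-- The limit velocity profile on the `m`-th spiral from the right:
`W^R(θ) := e^{iθ} Σ_k (2a g_k/(e^{a(θ−θ_m)}(a−i))) ·
conj( exp((2a/(a+i))·a(θ−θ_m)) e^{A(θ_k−θ)} e^{2πχ_{k<m}A}/(1−e^{2πA}) )`. -/
noncomputable def WR (a : ℝ) (M : ℕ) (g θs : Fin M → ℝ) (m : Fin M) (θ : ℝ) : ℂ :=
  Complex.exp (Complex.I * (θ : ℂ)) * ∑ k : Fin M,
    (2 * (a : ℂ) * (g k : ℂ) /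
        ((Real.exp (a * (θ - θs m)) : ℂ) * ((a : ℂ) - Complex.I))) *
      (starRingEnd ℂ)
        (Complex.exp ((2 * (a : ℂ) / ((a : ℂ) + Complex.I)) * ((a * (θ - θs m) : ℝ) : ℂ)) *
          Complex.exp (Aconst a * ((θs k : ℂ) - (θ : ℂ))) *
          (Complex.exp (2 * (Real.pi : ℂ) * (if k < m then 1 else 0) * Aconst a) /
            (1 - Complex.exp (2 * (Real.pi : ℂ) * Aconst a))))

/-- The limit velocity profile on the `m`-th spiral from the left: as `WR` but with the
indicator of `k < m` replaced by the indicator of `k ≤ m`. -/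
noncomputable def WL (a : ℝ) (M : ℕ) (g θs : Fin M → ℝ) (m : Fin M) (θ : ℝ) : ℂ :=
  Complex.exp (Complex.I * (θ : ℂ)) * ∑ k : Fin M,
    (2 * (a : ℂ) * (g k : ℂ) /
        ((Real.exp (a * (θ - θs m)) : ℂ) * ((a : ℂ) - Complex.I))) *
      (starRingEnd ℂ)
        (Complex.exp ((2 * (a : ℂ) / ((a : ℂ) + Complex.I)) * ((a * (θ - θs m) : ℝ) : ℂ)) *
          Complex.exp (Aconst a * ((θs k : ℂ) - (θ : ℂ))) *
          (Complex.exp (2 * (Real.pi : ℂ) * (if k ≤ m then 1 else 0) * Aconst a) /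
            (1 - Complex.exp (2 * (Real.pi : ℂ) * Aconst a))))

/-
Since `e^{iθ}` has modulus one and `e^{a(θ−θ_m)}`, `μ` are real, the phase `e^{iθ}` cancels
against the conjugate of the one in `W^R + W^L`. In the `k`-th summand the exponent
`2a²(θ−θ_m)/(a+i) + A(θ_k−θ)` equals `2a(θ−θ_m) + A(θ_k−θ_m)`, and the two jump weights add up to
`−(e^{−πA}, cosh πA or e^{πA})/sinh(πA)` because `1 − e^{2p} = −2 e^p sinh p`. Hence the bracket
is `−i e^{2a(θ−θ_m)} (a/sinh(πA) · Σ_k 𝒜_{mk} g_k + μ(a+i))`, whose real part is the claim; the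
equivalence follows by taking `θ = θ_m`.
-/

section

open Complex

theorem one_sub_exp_two_mul (p : ℂ) : 1 - exp (2 * p) = -2 * exp p * sinh p := by
  rw [sinh, two_mul, exp_add, exp_neg]
  field_simp [exp_ne_zero p]
  ring

theorem inv_one_sub_exp_two_mul (p : ℂ) : (1 - exp (2 * p))⁻¹ = -exp (-p) / (2 * sinh p) := by
  rw [one_sub_exp_two_mul, mul_inv, mul_inv, ← exp_neg, div_eq_mul_inv, mul_inv]
  ring

theorem jump_weights_add {α : Type*} [LinearOrder α] (k m : α) (r A : ℂ) :
    exp (2 * r * (if k < m then 1 else 0) * A) / (1 - exp (2 * r * A)) +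
        exp (2 * r * (if k ≤ m then 1 else 0) * A) / (1 - exp (2 * r * A)) =
      -(if m < k then exp (-r * A) else if k = m then cosh (r * A) else exp (r * A)) /
        sinh (r * A) := by
  have hw (z : ℂ) : z / (1 - exp (2 * r * A)) = -z * exp (-(r * A)) / (2 * sinh (r * A)) := by
    rw [div_eq_mul_inv, mul_assoc 2, inv_one_sub_exp_two_mul]
    ring
  have h2 : exp (2 * r * A) = exp (r * A) * exp (r * A) := by rw [← exp_add]; ring_nf
  rw [hw, hw, neg_mul r A, exp_neg]
  rcases lt_trichotomy k m with hkm | rfl | hkm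
  · simp only [if_pos hkm, if_pos hkm.le, if_neg hkm.not_gt, if_neg hkm.ne, mul_one, h2]
    field_simp [exp_ne_zero (r * A)]
    ring
  · simp only [lt_irrefl, le_refl, if_true, if_false, mul_zero, zero_mul, exp_zero, mul_one, cosh,
      h2, exp_neg]
    field_simp [exp_ne_zero (r * A)]
    ring
  · simp only [if_neg hkm.not_gt, if_neg hkm.not_ge, if_pos hkm, mul_zero, zero_mul, exp_zero]
    ring

theorem add_I_ne_zero (a : ℝ) : (a : ℂ) + I ≠ 0 := by
  intro h
  simpa using congrArg im h

theorem exp_spiral_phase (a θm θk θ : ℝ) :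
    exp (2 * a / (a + I) * ((a * (θ - θm) : ℝ) : ℂ)) * exp (Aconst a * (θk - θ)) =
      ((Real.exp (a * (θ - θm)) : ℝ) : ℂ) ^ 2 * exp (Aconst a * (θk - θm)) := by
  rw [ofReal_exp, ← exp_nat_mul, ← exp_add, ← exp_add, Aconst]
  congr 1
  field_simp [add_I_ne_zero a]
  push_cast
  ring

theorem conj_WR_add_WL (a : ℝ) (M : ℕ) (g θs : Fin M → ℝ) (m : Fin M) (θ : ℝ) :
    starRingEnd ℂ (WR a M g θs m θ + WL a M g θs m θ) =
      starRingEnd ℂ (exp (I * θ)) *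
        (-2 * a * Real.exp (a * (θ - θs m)) / ((a + I) * sinh (Real.pi * Aconst a)) *
          ∑ k, Amat a M θs m k * (g k : ℂ)) := by
  rw [WR, WL, ← mul_add, ← Finset.sum_add_distrib, map_mul, map_sum]
  congr 1
  rw [Finset.mul_sum]
  refine Finset.sum_congr rfl fun k _ => ?_
  rw [← mul_add, ← map_add, ← mul_add, map_mul, conj_conj, jump_weights_add, exp_spiral_phase,
    Amat]
  have hE : ((Real.exp (a * (θ - θs m)) : ℝ) : ℂ) ≠ 0 := ofReal_ne_zero.2 (Real.exp_ne_zero _)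
  simp only [map_div₀, map_mul, map_sub, conj_ofReal, conj_I, map_ofNat, sub_neg_eq_add]
  field_simp [add_I_ne_zero a]

theorem velocity_bracket (a : ℝ) (M : ℕ) (g θs : Fin M → ℝ) (m : Fin M) (θ μ : ℝ) :
    I * ((a : ℂ) + I) * (Real.exp (a * (θ - θs m)) : ℂ) * exp (I * θ) *
        starRingEnd ℂ ((WR a M g θs m θ + WL a M g θs m θ) / 2 -
          μ * ((Real.exp (a * (θ - θs m)) : ℂ) * exp (I * θ))) =
      -I * (Real.exp (2 * a * (θ - θs m)) : ℂ) *
        (a / sinh (Real.pi * Aconst a) * ∑ k, Amat a M θs m k * (g k : ℂ) + μ * (a + I)) := by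
  have hx : exp (I * θ) * starRingEnd ℂ (exp (I * θ)) = 1 := by
    rw [← exp_conj, ← exp_add, map_mul, conj_I, conj_ofReal, neg_mul, add_neg_cancel, exp_zero]
  have hE : (Real.exp (2 * a * (θ - θs m)) : ℂ) =
      (Real.exp (a * (θ - θs m)) : ℂ) * (Real.exp (a * (θ - θs m)) : ℂ) := by
    rw [← ofReal_mul, ← Real.exp_add]
    ring_nf
  rw [map_sub, map_div₀, conj_WR_add_WL, map_mul, map_mul, conj_ofReal, conj_ofReal, map_ofNat]
  set x := exp (I * θ)
  set E := (Real.exp (a * (θ - θs m)) : ℂ)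
  set S := ∑ k, Amat a M θs m k * (g k : ℂ)
  calc _ = I * (a + I) * E * ((-2 * a * E / ((a + I) * sinh (Real.pi * Aconst a)) * S) / 2
          - μ * E) * (x * starRingEnd ℂ x) := by ring
    _ = _ := by
      rw [hx, mul_one, hE]
      field_simp [add_I_ne_zero a]
      ring

theorem re_neg_I_mul_ofReal_mul (r : ℝ) (z : ℂ) : (-I * r * z).re = r * z.im := by
  simp [mul_re, mul_im]

end

theorem velocity_matching (a : ℝ) (M : ℕ) (g θs : Fin M → ℝ) (μ : ℝ) :
    (∀ (m : Fin M) (θ : ℝ),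
      (Complex.I * ((a : ℂ) + Complex.I) * (Real.exp (a * (θ - θs m)) : ℂ) *
          Complex.exp (Complex.I * (θ : ℂ)) *
          (starRingEnd ℂ) ((WR a M g θs m θ + WL a M g θs m θ) / 2 -
            (μ : ℂ) * ((Real.exp (a * (θ - θs m)) : ℂ) *
              Complex.exp (Complex.I * (θ : ℂ))))).re =
        Real.exp (2 * a * (θ - θs m)) *
          (((a : ℂ) / Complex.sinh ((Real.pi : ℂ) * Aconst a)) *
              (∑ k : Fin M, Amat a M θs m k * (g k : ℂ)) +
            (μ : ℂ) * ((a : ℂ) + Complex.I)).im) ∧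
    ((∀ (m : Fin M) (θ : ℝ),
        (Complex.I * ((a : ℂ) + Complex.I) * (Real.exp (a * (θ - θs m)) : ℂ) *
            Complex.exp (Complex.I * (θ : ℂ)) *
            (starRingEnd ℂ) ((WR a M g θs m θ + WL a M g θs m θ) / 2 -
              (μ : ℂ) * ((Real.exp (a * (θ - θs m)) : ℂ) *
                Complex.exp (Complex.I * (θ : ℂ))))).re = 0) ↔
      (∀ m : Fin M,
        (((a : ℂ) / Complex.sinh ((Real.pi : ℂ) * Aconst a)) *
            (∑ k : Fin M, Amat a M θs m k * (g k : ℂ)) +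
          (μ : ℂ) * ((a : ℂ) + Complex.I)).im = 0)) := by
  have identity (m : Fin M) (θ : ℝ) := congrArg Complex.re (velocity_bracket a M g θs m θ μ)
  simp only [re_neg_I_mul_ofReal_mul] at identity
  refine ⟨identity, fun h m => ?_, fun h m θ => by rw [identity, h m, mul_zero]⟩
  have at_θm := identity m (θs m)
  rwa [h m, sub_self, mul_zero, Real.exp_zero, one_mul, eq_comm] at at_θm
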